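/- Let H be a Hopf algebra over a commutative ring k and A a right H-comodule algebra with coinvariant subalgebra B. If there exists a convolution invertible right H-colinear map λ : H → A with convolution inverse λ̄, then A is isomorphic to B ⊗_k H as a left B-module and right H-comodule (normal basis property). Explicitly, the maps A → B ⊗ H, a ↦ Σ a₍₀₎ λ̄(a₍₁₎) ⊗ a₍₂₎, and B ⊗ H → A, b ⊗ h ↦ b λ(h), are mutually inverse, left B-linear, and right H-colinear. -/

import Mathlib

open TensorProduct

noncomputable section

variable {k H A : Type*} [CommRing k] [Ring H] [HopfAlgebra k H] [Ring A] [Algebra k A]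

/-- Convolution product of two linear maps from a coalgebra to an algebra. -/
def convA (f g : H →ₗ[k] A) : H →ₗ[k] A :=
  LinearMap.mul' k A ∘ₗ TensorProduct.map f g ∘ₗ Coalgebra.comul

/-- The unit of the convolution algebra `Hom_k(H, A)`. -/
def convUnit : H →ₗ[k] A :=
  Algebra.linearMap k A ∘ₗ Coalgebra.counit

/-- `ρ : A → A ⊗ H` is a coassociative counital coaction. -/
def IsCoaction (ρ : A →ₐ[k] A ⊗[k] H) : Prop :=
  (∀ a : A, (TensorProduct.assoc k A H H) ((ρ.toLinearMap.rTensor H) (ρ a)) =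
      (Coalgebra.comul (R := k) (A := H)).lTensor A (ρ a)) ∧
  (∀ a : A, (TensorProduct.rid k A) ((Coalgebra.counit (R := k) (A := H)).lTensor A (ρ a)) = a)

/-- Right `H`-colinearity of a map `H → A` with respect to a coaction on `A` and the
regular coaction (the coproduct) on `H`. -/
def IsColinearMap (ρ : A →ₐ[k] A ⊗[k] H) (lam : H →ₗ[k] A) : Prop :=
  ρ.toLinearMap ∘ₗ lam = lam.rTensor H ∘ₗ Coalgebra.comul

/-- The coinvariant submodule `B = {b | ρ b = b ⊗ 1}`. -/
def coinvSub (ρ : A →ₐ[k] A ⊗[k] H) : Submodule k A :=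
  LinearMap.ker (ρ.toLinearMap - (TensorProduct.mk k A H).flip 1)

/-- `a ↦ ∑ a₍₀₎ λ̄(a₍₁₎)`. -/
def nuMap (ρ : A →ₐ[k] A ⊗[k] H) (lamBar : H →ₗ[k] A) : A →ₗ[k] A :=
  LinearMap.mul' k A ∘ₗ lamBar.lTensor A ∘ₗ ρ.toLinearMap

/-- `a ↦ ∑ a₍₀₎ λ̄(a₍₁₎) ⊗ a₍₂₎`. -/
def phiMap (ρ : A →ₐ[k] A ⊗[k] H) (lamBar : H →ₗ[k] A) : A →ₗ[k] A ⊗[k] H :=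
  (nuMap ρ lamBar).rTensor H ∘ₗ ρ.toLinearMap

/-- `a ⊗ h ↦ a λ(h)`. -/
def psiMap (lam : H →ₗ[k] A) : A ⊗[k] H →ₗ[k] A :=
  LinearMap.mul' k A ∘ₗ lam.lTensor A

section ConvAlgebra

variable {C D : Type*} [Ring C] [Algebra k C] [Ring D] [Algebra k D]

/-- generic convolution -/
def conv' (f g : H →ₗ[k] C) : H →ₗ[k] C :=
  LinearMap.mul' k C ∘ₗ TensorProduct.map f g ∘ₗ Coalgebra.comul

def convOne' : H →ₗ[k] C := Algebra.linearMap k C ∘ₗ Coalgebra.counit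

lemma conv'_assoc (f g h : H →ₗ[k] C) : conv' (conv' f g) h = conv' f (conv' g h) := by
  unfold conv'
  have e1 : TensorProduct.map (LinearMap.mul' k C ∘ₗ TensorProduct.map f g ∘ₗ Coalgebra.comul) h
      = TensorProduct.map (LinearMap.mul' k C) LinearMap.id
        ∘ₗ TensorProduct.map (TensorProduct.map f g) h
        ∘ₗ (Coalgebra.comul (R := k) (A := H)).rTensor H := by
    simp only [LinearMap.rTensor, ← TensorProduct.map_comp, LinearMap.comp_id, LinearMap.id_comp]
  have e2 : TensorProduct.map f (LinearMap.mul' k C ∘ₗ TensorProduct.map g h ∘ₗ Coalgebra.comul)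
      = TensorProduct.map LinearMap.id (LinearMap.mul' k C)
        ∘ₗ TensorProduct.map f (TensorProduct.map g h)
        ∘ₗ (Coalgebra.comul (R := k) (A := H)).lTensor H := by
    simp only [LinearMap.lTensor, ← TensorProduct.map_comp, LinearMap.comp_id, LinearMap.id_comp]
  rw [e1, e2]
  have coas : (Coalgebra.comul (R := k) (A := H)).lTensor H ∘ₗ Coalgebra.comul
      = (TensorProduct.assoc k H H H).toLinearMap
        ∘ₗ (Coalgebra.comul (R := k) (A := H)).rTensor H ∘ₗ Coalgebra.comul :=
    Coalgebra.coassoc.symm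
  have key : LinearMap.mul' k C ∘ₗ TensorProduct.map LinearMap.id (LinearMap.mul' k C)
        ∘ₗ TensorProduct.map f (TensorProduct.map g h)
        ∘ₗ (TensorProduct.assoc k H H H).toLinearMap
      = LinearMap.mul' k C ∘ₗ TensorProduct.map (LinearMap.mul' k C) LinearMap.id
        ∘ₗ TensorProduct.map (TensorProduct.map f g) h := by
    apply TensorProduct.ext_threefold
    intro x y z
    simp [mul_assoc]
  simp only [LinearMap.comp_assoc]
  rw [coas]
  simp only [← LinearMap.comp_assoc] at key ⊢
  rw [key]

lemma conv'_one_mul (f : H →ₗ[k] C) : conv' convOne' f = f := by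
  unfold conv' convOne'
  have e1 : TensorProduct.map (Algebra.linearMap k C ∘ₗ Coalgebra.counit) f
      = TensorProduct.map (Algebra.linearMap k C) f
        ∘ₗ (Coalgebra.counit (R := k) (A := H)).rTensor H := by
    simp only [LinearMap.rTensor, ← TensorProduct.map_comp, LinearMap.comp_id, LinearMap.id_comp]
  rw [e1]
  simp only [LinearMap.comp_assoc]
  rw [Coalgebra.rTensor_counit_comp_comul]
  ext x
  simp [Algebra.smul_def]

lemma conv'_mul_one (f : H →ₗ[k] C) : conv' f convOne' = f := by
  unfold conv' convOne'
  have e1 : TensorProduct.map f (Algebra.linearMap k C ∘ₗ Coalgebra.counit)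
      = TensorProduct.map f (Algebra.linearMap k C)
        ∘ₗ (Coalgebra.counit (R := k) (A := H)).lTensor H := by
    simp only [LinearMap.lTensor, ← TensorProduct.map_comp, LinearMap.comp_id, LinearMap.id_comp]
  rw [e1]
  simp only [LinearMap.comp_assoc]
  rw [Coalgebra.lTensor_counit_comp_comul]
  ext x
  simp [Algebra.smul_def, Algebra.commutes]

lemma conv'_inv_unique {f g g' : H →ₗ[k] C} (h1 : conv' f g = convOne')
    (h2 : conv' g' f = convOne') : g = g' := by
  have : conv' g' (conv' f g) = conv' (conv' g' f) g := (conv'_assoc _ _ _).symm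
  rw [h1, h2, conv'_mul_one, conv'_one_mul] at this
  exact this.symm

lemma mul'_comp_algHom (φ : C →ₐ[k] D) :
    φ.toLinearMap ∘ₗ LinearMap.mul' k C
      = LinearMap.mul' k D ∘ₗ TensorProduct.map φ.toLinearMap φ.toLinearMap := by
  apply TensorProduct.ext'
  intro x y
  simp

lemma conv'_push (φ : C →ₐ[k] D) (f g : H →ₗ[k] C) :
    φ.toLinearMap ∘ₗ conv' f g = conv' (φ.toLinearMap ∘ₗ f) (φ.toLinearMap ∘ₗ g) := by
  unfold conv'
  rw [← LinearMap.comp_assoc, ← LinearMap.comp_assoc, mul'_comp_algHom]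
  simp only [LinearMap.comp_assoc, ← TensorProduct.map_comp]

lemma conv'_push_one (φ : C →ₐ[k] D) :
    φ.toLinearMap ∘ₗ (convOne' : H →ₗ[k] C) = convOne' := by
  unfold convOne'
  ext x
  simp

end ConvAlgebra

section Colinear

/-- `h ↦ ∑ λ̄(h₂) ⊗ S(h₁)`. -/
def Tm' (lamBar : H →ₗ[k] A) : H →ₗ[k] A ⊗[k] H :=
  TensorProduct.map lamBar (HopfAlgebra.antipode (R := k) (A := H))
    ∘ₗ (TensorProduct.comm k H H).toLinearMap ∘ₗ Coalgebra.comul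

variable (lam lamBar : H →ₗ[k] A)

private def αm : H →ₗ[k] A ⊗[k] H :=
  (Algebra.TensorProduct.includeLeft : A →ₐ[k] A ⊗[k] H).toLinearMap ∘ₗ lam

private def βm : H →ₗ[k] A ⊗[k] H :=
  (Algebra.TensorProduct.includeRight : H →ₐ[k] A ⊗[k] H).toLinearMap

private def β'm : H →ₗ[k] A ⊗[k] H :=
  (Algebra.TensorProduct.includeRight : H →ₐ[k] A ⊗[k] H).toLinearMap
    ∘ₗ HopfAlgebra.antipode (R := k) (A := H)

private def γm : H →ₗ[k] A ⊗[k] H :=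
  (Algebra.TensorProduct.includeLeft : A →ₐ[k] A ⊗[k] H).toLinearMap ∘ₗ lamBar

lemma conv_id_antipode : conv' LinearMap.id (HopfAlgebra.antipode (R := k) (A := H))
    = (convOne' : H →ₗ[k] H) := by
  unfold conv' convOne'
  rw [show TensorProduct.map LinearMap.id (HopfAlgebra.antipode (R := k) (A := H))
      = (HopfAlgebra.antipode (R := k) (A := H)).lTensor H from rfl]
  exact HopfAlgebra.mul_antipode_lTensor_comul

lemma conv_antipode_id : conv' (HopfAlgebra.antipode (R := k) (A := H)) LinearMap.id
    = (convOne' : H →ₗ[k] H) := by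
  unfold conv' convOne'
  rw [show TensorProduct.map (HopfAlgebra.antipode (R := k) (A := H)) LinearMap.id
      = (HopfAlgebra.antipode (R := k) (A := H)).rTensor H from rfl]
  exact HopfAlgebra.mul_antipode_rTensor_comul

lemma conv_bb : conv' ((βm : H →ₗ[k] A ⊗[k] H)) ((β'm : H →ₗ[k] A ⊗[k] H)) = convOne' := by
  have : conv' ((βm : H →ₗ[k] A ⊗[k] H)) ((β'm : H →ₗ[k] A ⊗[k] H))
      = (Algebra.TensorProduct.includeRight : H →ₐ[k] A ⊗[k] H).toLinearMap
          ∘ₗ conv' LinearMap.id (HopfAlgebra.antipode (R := k) (A := H)) := by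
    rw [conv'_push]
    unfold βm β'm
    rw [LinearMap.comp_id]
  rw [this, conv_id_antipode, conv'_push_one]

lemma conv_b2b : conv' ((β'm : H →ₗ[k] A ⊗[k] H)) ((βm : H →ₗ[k] A ⊗[k] H)) = convOne' := by
  have : conv' ((β'm : H →ₗ[k] A ⊗[k] H)) ((βm : H →ₗ[k] A ⊗[k] H))
      = (Algebra.TensorProduct.includeRight : H →ₐ[k] A ⊗[k] H).toLinearMap
          ∘ₗ conv' (HopfAlgebra.antipode (R := k) (A := H)) LinearMap.id := by
    rw [conv'_push]
    unfold βm β'm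
    rw [LinearMap.comp_id]
  rw [this, conv_antipode_id, conv'_push_one]

lemma conv_ag (hinv₁ : convA lam lamBar = convUnit) : conv' (αm lam) (γm lamBar) = convOne' := by
  have : conv' (αm lam) (γm lamBar)
      = (Algebra.TensorProduct.includeLeft : A →ₐ[k] A ⊗[k] H).toLinearMap
          ∘ₗ conv' lam lamBar := by
    rw [conv'_push]; rfl
  rw [this, show (conv' lam lamBar : H →ₗ[k] A) = convA lam lamBar from rfl, hinv₁,
    show (convUnit : H →ₗ[k] A) = convOne' from rfl, conv'_push_one]

lemma conv_ga (hinv₂ : convA lamBar lam = convUnit) : conv' (γm lamBar) (αm lam) = convOne' := by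
  have : conv' (γm lamBar) (αm lam)
      = (Algebra.TensorProduct.includeLeft : A →ₐ[k] A ⊗[k] H).toLinearMap
          ∘ₗ conv' lamBar lam := by
    rw [conv'_push]; rfl
  rw [this, show (conv' lamBar lam : H →ₗ[k] A) = convA lamBar lam from rfl, hinv₂,
    show (convUnit : H →ₗ[k] A) = convOne' from rfl, conv'_push_one]

lemma conv_ab : conv' (αm lam) ((βm : H →ₗ[k] A ⊗[k] H)) = lam.rTensor H ∘ₗ Coalgebra.comul := by
  unfold conv' αm βm
  rw [← LinearMap.comp_assoc]
  congr 1
  apply TensorProduct.ext'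
  intro x y
  simp [Algebra.TensorProduct.includeLeft_apply, Algebra.TensorProduct.includeRight_apply,
    Algebra.TensorProduct.tmul_mul_tmul]

lemma conv_b2g : conv' ((β'm : H →ₗ[k] A ⊗[k] H)) (γm lamBar) = Tm' lamBar := by
  unfold conv' β'm γm Tm'
  rw [← LinearMap.comp_assoc, ← LinearMap.comp_assoc]
  congr 1
  apply TensorProduct.ext'
  intro x y
  simp [Algebra.TensorProduct.includeLeft_apply, Algebra.TensorProduct.includeRight_apply,
    Algebra.TensorProduct.tmul_mul_tmul]

lemma rho_comp_lamBar (ρ : A →ₐ[k] A ⊗[k] H)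
    (hcolin : ρ.toLinearMap ∘ₗ lam = lam.rTensor H ∘ₗ Coalgebra.comul)
    (hinv₁ : convA lam lamBar = convUnit) (hinv₂ : convA lamBar lam = convUnit) :
    ρ.toLinearMap ∘ₗ lamBar = Tm' lamBar := by
  apply conv'_inv_unique (f := ρ.toLinearMap ∘ₗ lam)
  · have : ρ.toLinearMap ∘ₗ conv' lam lamBar
        = conv' (ρ.toLinearMap ∘ₗ lam) (ρ.toLinearMap ∘ₗ lamBar) := conv'_push ρ lam lamBar
    rw [← this, show (conv' lam lamBar : H →ₗ[k] A) = convA lam lamBar from rfl, hinv₁,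
      show (convUnit : H →ₗ[k] A) = convOne' from rfl, conv'_push_one]
  · rw [hcolin, ← conv_ab lam, ← conv_b2g lamBar]
    rw [conv'_assoc, ← conv'_assoc (γm lamBar), conv_ga lam lamBar hinv₂, conv'_one_mul,
      conv_b2b]

end Colinear

section Main

variable (ρ : A →ₐ[k] A ⊗[k] H) (lam lamBar : H →ₗ[k] A)

lemma mem_coinvSub_iff (x : A) : x ∈ coinvSub ρ ↔ ρ x = x ⊗ₜ[k] (1 : H) := by
  simp [coinvSub, LinearMap.mem_ker, LinearMap.sub_apply, sub_eq_zero]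

lemma nu_coinv (hρ : IsCoaction ρ)
    (hrlb : ρ.toLinearMap ∘ₗ lamBar = Tm' lamBar)
    (hinv₂ : convA lamBar lam = convUnit) (a : A) :
    ρ (nuMap ρ lamBar a) = nuMap ρ lamBar a ⊗ₜ[k] (1 : H) := by
  set ρl := ρ.toLinearMap with hρl
  have s1 : ρ (nuMap ρ lamBar a)
      = LinearMap.mul' k (A ⊗[k] H)
          (TensorProduct.map ρl ρl (lamBar.lTensor A (ρ a))) := by
    have := LinearMap.congr_fun (mul'_comp_algHom ρ) (lamBar.lTensor A (ρ a))
    simpa [nuMap] using this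
  have e2 : TensorProduct.map ρl ρl ∘ₗ lamBar.lTensor A
      = TensorProduct.map ρl (Tm' lamBar) := by
    rw [← hrlb,
      show lamBar.lTensor A = TensorProduct.map LinearMap.id lamBar from rfl,
      ← TensorProduct.map_comp, LinearMap.comp_id]
  have s2 : ρ (nuMap ρ lamBar a)
      = LinearMap.mul' k (A ⊗[k] H) (TensorProduct.map ρl (Tm' lamBar) (ρ a)) := by
    rw [s1, ← LinearMap.comp_apply (TensorProduct.map ρl ρl), e2]
  have e3 : TensorProduct.map ρl (Tm' lamBar)
      = (Tm' lamBar).lTensor (A ⊗[k] H) ∘ₗ ρl.rTensor H :=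
    (LinearMap.lTensor_comp_rTensor _ _ _).symm
  have s3 : ρl.rTensor H (ρ a)
      = (TensorProduct.assoc k A H H).symm
          ((Coalgebra.comul (R := k) (A := H)).lTensor A (ρ a)) := by
    rw [← hρ.1 a]; simp; rfl
  have K : LinearMap.mul' k (A ⊗[k] H) ∘ₗ (Tm' lamBar).lTensor (A ⊗[k] H)
      = (LinearMap.mul' k (A ⊗[k] H) ∘ₗ TensorProduct.map
          (Algebra.TensorProduct.includeLeft : A →ₐ[k] A ⊗[k] H).toLinearMap
          (LinearMap.mul' k (A ⊗[k] H)
            ∘ₗ TensorProduct.map (βm : H →ₗ[k] A ⊗[k] H) (Tm' lamBar)))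
        ∘ₗ (TensorProduct.assoc k A H H).toLinearMap := by
    apply TensorProduct.ext_threefold
    intro x y z
    simp only [LinearMap.coe_comp, Function.comp_apply, LinearMap.lTensor_tmul,
      TensorProduct.map_tmul, TensorProduct.assoc_tmul, LinearMap.mul'_apply,
      AlgHom.toLinearMap_apply, Algebra.TensorProduct.includeLeft_apply, βm,
      Algebra.TensorProduct.includeRight_apply, LinearEquiv.coe_coe]
    rw [← mul_assoc, Algebra.TensorProduct.tmul_mul_tmul, mul_one, one_mul]
  have hβT : conv' (βm : H →ₗ[k] A ⊗[k] H) (Tm' lamBar) = γm lamBar := by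
    rw [← conv_b2g lamBar, ← conv'_assoc, conv_bb, conv'_one_mul]
  have e5 : TensorProduct.map
        (Algebra.TensorProduct.includeLeft : A →ₐ[k] A ⊗[k] H).toLinearMap
        (LinearMap.mul' k (A ⊗[k] H)
          ∘ₗ TensorProduct.map (βm : H →ₗ[k] A ⊗[k] H) (Tm' lamBar))
      ∘ₗ (Coalgebra.comul (R := k) (A := H)).lTensor A
      = TensorProduct.map
          (Algebra.TensorProduct.includeLeft : A →ₐ[k] A ⊗[k] H).toLinearMap
          (γm lamBar) := by
    rw [show (Coalgebra.comul (R := k) (A := H)).lTensor A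
        = TensorProduct.map LinearMap.id (Coalgebra.comul (R := k) (A := H)) from rfl,
      ← TensorProduct.map_comp, LinearMap.comp_id, ← hβT]
    rfl
  have e6 : LinearMap.mul' k (A ⊗[k] H) ∘ₗ TensorProduct.map
        (Algebra.TensorProduct.includeLeft : A →ₐ[k] A ⊗[k] H).toLinearMap (γm lamBar)
      = (TensorProduct.mk k A H).flip 1 ∘ₗ LinearMap.mul' k A ∘ₗ lamBar.lTensor A := by
    apply TensorProduct.ext'
    intro x y
    simp [γm, Algebra.TensorProduct.tmul_mul_tmul]
  calc ρ (nuMap ρ lamBar a)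
      = LinearMap.mul' k (A ⊗[k] H) ((Tm' lamBar).lTensor (A ⊗[k] H)
          ((TensorProduct.assoc k A H H).symm
            ((Coalgebra.comul (R := k) (A := H)).lTensor A (ρ a)))) := by
        rw [s2, e3, LinearMap.comp_apply, s3]
    _ = (LinearMap.mul' k (A ⊗[k] H) ∘ₗ TensorProduct.map
          (Algebra.TensorProduct.includeLeft : A →ₐ[k] A ⊗[k] H).toLinearMap
          (LinearMap.mul' k (A ⊗[k] H)
            ∘ₗ TensorProduct.map (βm : H →ₗ[k] A ⊗[k] H) (Tm' lamBar)))
          ((Coalgebra.comul (R := k) (A := H)).lTensor A (ρ a)) := by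
        rw [← LinearMap.comp_apply (LinearMap.mul' k (A ⊗[k] H)), K]
        simp
    _ = ((TensorProduct.mk k A H).flip 1 ∘ₗ LinearMap.mul' k A ∘ₗ lamBar.lTensor A) (ρ a) := by
        rw [LinearMap.comp_apply, ← LinearMap.comp_apply _ ((Coalgebra.comul (R := k) (A := H)).lTensor A), e5, ← e6]
        simp
    _ = nuMap ρ lamBar a ⊗ₜ[k] (1 : H) := by simp [nuMap]

end Main

section Main2

variable (ρ : A →ₐ[k] A ⊗[k] H) (lam lamBar : H →ₗ[k] A)

lemma psi_phi (hρ : IsCoaction ρ) (hinv₂ : convA lamBar lam = convUnit) (a : A) :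
    psiMap lam (phiMap ρ lamBar a) = a := by
  set ρl := ρ.toLinearMap with hρl
  have s1 : psiMap lam (phiMap ρ lamBar a)
      = LinearMap.mul' k A (TensorProduct.map (nuMap ρ lamBar) lam (ρ a)) := by
    simp only [psiMap, phiMap, LinearMap.comp_apply]
    rw [← LinearMap.comp_apply (lam.lTensor A), LinearMap.lTensor_comp_rTensor]
    rfl
  have e2 : TensorProduct.map (nuMap ρ lamBar) lam
      = TensorProduct.map (LinearMap.mul' k A ∘ₗ lamBar.lTensor A) lam ∘ₗ ρl.rTensor H := by
    rw [show ρl.rTensor H = TensorProduct.map ρl LinearMap.id from rfl,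
      ← TensorProduct.map_comp, LinearMap.comp_id]
    rfl
  have s3 : ρl.rTensor H (ρ a)
      = (TensorProduct.assoc k A H H).symm
          ((Coalgebra.comul (R := k) (A := H)).lTensor A (ρ a)) := by
    rw [← hρ.1 a]; simp; rfl
  have e4 : LinearMap.mul' k A
        ∘ₗ TensorProduct.map (LinearMap.mul' k A ∘ₗ lamBar.lTensor A) lam
      = (LinearMap.mul' k A
          ∘ₗ (LinearMap.mul' k A ∘ₗ TensorProduct.map lamBar lam).lTensor A)
        ∘ₗ (TensorProduct.assoc k A H H).toLinearMap := by
    apply TensorProduct.ext_threefold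
    intro x y z
    simp [mul_assoc]
  have e5 : (LinearMap.mul' k A ∘ₗ TensorProduct.map lamBar lam).lTensor A
        ∘ₗ (Coalgebra.comul (R := k) (A := H)).lTensor A
      = (convUnit : H →ₗ[k] A).lTensor A := by
    rw [← LinearMap.lTensor_comp, ← hinv₂]
    rfl
  have e6 : LinearMap.mul' k A ∘ₗ (convUnit : H →ₗ[k] A).lTensor A
      = (TensorProduct.rid k A).toLinearMap
        ∘ₗ (Coalgebra.counit (R := k) (A := H)).lTensor A := by
    apply TensorProduct.ext'
    intro x y
    simp [convUnit, Algebra.smul_def, Algebra.commutes]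
  calc psiMap lam (phiMap ρ lamBar a)
      = (LinearMap.mul' k A
          ∘ₗ TensorProduct.map (LinearMap.mul' k A ∘ₗ lamBar.lTensor A) lam)
          ((TensorProduct.assoc k A H H).symm
            ((Coalgebra.comul (R := k) (A := H)).lTensor A (ρ a))) := by
        rw [s1, e2, ← s3]; simp only [LinearMap.comp_apply]
    _ = ((LinearMap.mul' k A
          ∘ₗ (LinearMap.mul' k A ∘ₗ TensorProduct.map lamBar lam).lTensor A))
          ((Coalgebra.comul (R := k) (A := H)).lTensor A (ρ a)) := by
        rw [e4]; simp
    _ = (LinearMap.mul' k A ∘ₗ (convUnit : H →ₗ[k] A).lTensor A) (ρ a) := by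
        rw [LinearMap.comp_apply, ← LinearMap.comp_apply ((LinearMap.mul' k A ∘ₗ TensorProduct.map lamBar lam).lTensor A), e5]
        rfl
    _ = a := by rw [e6]; exact hρ.2 a

lemma phi_lam (hcolin : ρ.toLinearMap ∘ₗ lam = lam.rTensor H ∘ₗ Coalgebra.comul)
    (hinv₁ : convA lam lamBar = convUnit) (h : H) :
    phiMap ρ lamBar (lam h) = (1 : A) ⊗ₜ[k] h := by
  have hnl : nuMap ρ lamBar ∘ₗ lam = (convUnit : H →ₗ[k] A) := by
    rw [← hinv₁]
    unfold nuMap convA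
    rw [← LinearMap.lTensor_comp_rTensor (f := lam) (g := lamBar)]
    simp only [LinearMap.comp_assoc, hcolin]
  have e1 : (convUnit : H →ₗ[k] A).rTensor H ∘ₗ Coalgebra.comul
      = (Algebra.linearMap k A).rTensor H ∘ₗ TensorProduct.mk k k H 1 := by
    unfold convUnit
    rw [LinearMap.rTensor_comp, LinearMap.comp_assoc, Coalgebra.rTensor_counit_comp_comul]
  have s1 : phiMap ρ lamBar (lam h)
      = (nuMap ρ lamBar).rTensor H (lam.rTensor H (Coalgebra.comul h)) := by
    simp only [phiMap, LinearMap.comp_apply]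
    rw [show ρ.toLinearMap (lam h) = (ρ.toLinearMap ∘ₗ lam) h from rfl, hcolin]
    rfl
  rw [s1, ← LinearMap.rTensor_comp_apply, hnl,
    show (convUnit : H →ₗ[k] A).rTensor H (Coalgebra.comul h)
      = ((convUnit : H →ₗ[k] A).rTensor H ∘ₗ Coalgebra.comul) h from rfl, e1]
  simp

end Main2

section Main3

variable (ρ : A →ₐ[k] A ⊗[k] H) (lam lamBar : H →ₗ[k] A)

lemma nu_mul (b : A) (hb : ρ b = b ⊗ₜ[k] (1 : H)) (x : A) :
    nuMap ρ lamBar (b * x) = b * nuMap ρ lamBar x := by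
  have e : (LinearMap.mul' k A ∘ₗ lamBar.lTensor A) ∘ₗ LinearMap.mulLeft k (b ⊗ₜ[k] (1 : H))
      = LinearMap.mulLeft k b ∘ₗ LinearMap.mul' k A ∘ₗ lamBar.lTensor A := by
    apply TensorProduct.ext'
    intro x y
    simp [Algebra.TensorProduct.tmul_mul_tmul, mul_assoc]
  have h2 := LinearMap.congr_fun e (ρ.toLinearMap x)
  simp only [LinearMap.comp_apply, LinearMap.mulLeft_apply] at h2
  have h3 : (b ⊗ₜ[k] (1 : H)) * ρ.toLinearMap x = ρ.toLinearMap (b * x) := by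
    simp only [AlgHom.toLinearMap_apply, map_mul, hb]
  rw [h3] at h2
  simpa [nuMap] using h2

lemma phi_mul (b : A) (hb : ρ b = b ⊗ₜ[k] (1 : H)) (x : A) :
    phiMap ρ lamBar (b * x) = (b ⊗ₜ[k] (1 : H)) * phiMap ρ lamBar x := by
  have e : (nuMap ρ lamBar).rTensor H ∘ₗ LinearMap.mulLeft k (b ⊗ₜ[k] (1 : H))
      = LinearMap.mulLeft k (b ⊗ₜ[k] (1 : H)) ∘ₗ (nuMap ρ lamBar).rTensor H := by
    apply TensorProduct.ext'
    intro x y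
    simp [Algebra.TensorProduct.tmul_mul_tmul, nu_mul ρ lamBar b hb]
  have h2 := LinearMap.congr_fun e (ρ.toLinearMap x)
  simp only [LinearMap.comp_apply, LinearMap.mulLeft_apply] at h2
  have h3 : (b ⊗ₜ[k] (1 : H)) * ρ.toLinearMap x = ρ.toLinearMap (b * x) := by
    simp only [AlgHom.toLinearMap_apply, map_mul, hb]
  rw [h3] at h2
  simpa [phiMap] using h2

lemma psi_mulLeft (b : A) (z : A ⊗[k] H) :
    psiMap lam ((b ⊗ₜ[k] (1 : H)) * z) = b * psiMap lam z := by
  have e : psiMap lam ∘ₗ LinearMap.mulLeft k (b ⊗ₜ[k] (1 : H))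
      = LinearMap.mulLeft k b ∘ₗ psiMap lam := by
    apply TensorProduct.ext'
    intro x y
    simp [psiMap, Algebra.TensorProduct.tmul_mul_tmul, mul_assoc]
  have h2 := LinearMap.congr_fun e z
  simpa using h2

lemma phi_colinear (hρ : IsCoaction ρ) (a : A) :
    (TensorProduct.assoc k A H H).symm
        ((Coalgebra.comul (R := k) (A := H)).lTensor A (phiMap ρ lamBar a)) =
      ((phiMap ρ lamBar).rTensor H) (ρ a) := by
  have e1 : (Coalgebra.comul (R := k) (A := H)).lTensor A ∘ₗ (nuMap ρ lamBar).rTensor H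
      = (nuMap ρ lamBar).rTensor (H ⊗[k] H)
        ∘ₗ (Coalgebra.comul (R := k) (A := H)).lTensor A := by
    rw [LinearMap.lTensor_comp_rTensor, LinearMap.rTensor_comp_lTensor]
  have e2 : (TensorProduct.assoc k A H H).symm.toLinearMap
        ∘ₗ (nuMap ρ lamBar).rTensor (H ⊗[k] H)
        ∘ₗ (TensorProduct.assoc k A H H).toLinearMap
      = ((nuMap ρ lamBar).rTensor H).rTensor H := by
    apply TensorProduct.ext_threefold
    intro x y z
    simp
  calc (TensorProduct.assoc k A H H).symm
        ((Coalgebra.comul (R := k) (A := H)).lTensor A (phiMap ρ lamBar a))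
      = (TensorProduct.assoc k A H H).symm
          ((nuMap ρ lamBar).rTensor (H ⊗[k] H)
            ((TensorProduct.assoc k A H H)
              ((ρ.toLinearMap.rTensor H) (ρ a)))) := by
        rw [hρ.1 a]
        have := LinearMap.congr_fun e1 (ρ.toLinearMap a)
        simp only [LinearMap.comp_apply] at this
        rw [show phiMap ρ lamBar a
            = (nuMap ρ lamBar).rTensor H (ρ.toLinearMap a) from rfl, this]
        rfl
    _ = ((nuMap ρ lamBar).rTensor H).rTensor H ((ρ.toLinearMap.rTensor H) (ρ a)) := by
        have := LinearMap.congr_fun e2 ((ρ.toLinearMap.rTensor H) (ρ a))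
        simp only [LinearMap.comp_apply] at this
        rw [← this]
        rfl
    _ = ((phiMap ρ lamBar).rTensor H) (ρ a) := by
        rw [show phiMap ρ lamBar = (nuMap ρ lamBar).rTensor H ∘ₗ ρ.toLinearMap from rfl,
          LinearMap.rTensor_comp]
        rfl

lemma psi_colinear_pure (hcolin : ρ.toLinearMap ∘ₗ lam = lam.rTensor H ∘ₗ Coalgebra.comul)
    (b : A) (hb : ρ b = b ⊗ₜ[k] (1 : H)) (h : H) :
    ρ (psiMap lam (b ⊗ₜ[k] h)) =
      ((psiMap lam).rTensor H) ((TensorProduct.assoc k A H H).symm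
        ((Coalgebra.comul (R := k) (A := H)).lTensor A (b ⊗ₜ[k] h))) := by
  have hψ : psiMap lam (b ⊗ₜ[k] h) = b * lam h := by simp [psiMap]
  have e : LinearMap.mulLeft k (b ⊗ₜ[k] (1 : H)) ∘ₗ lam.rTensor H
      = (psiMap lam).rTensor H ∘ₗ (TensorProduct.assoc k A H H).symm.toLinearMap
        ∘ₗ TensorProduct.mk k A (H ⊗[k] H) b := by
    apply TensorProduct.ext'
    intro x y
    simp [psiMap, Algebra.TensorProduct.tmul_mul_tmul]
  have lhs : ρ (psiMap lam (b ⊗ₜ[k] h))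
      = (b ⊗ₜ[k] (1 : H)) * (lam.rTensor H (Coalgebra.comul h)) := by
    rw [hψ, map_mul, hb, show ρ (lam h) = (ρ.toLinearMap ∘ₗ lam) h from rfl, hcolin]
    rfl
  have rhs : (Coalgebra.comul (R := k) (A := H)).lTensor A (b ⊗ₜ[k] h)
      = b ⊗ₜ[k] (Coalgebra.comul (R := k) (A := H) h) := rfl
  rw [lhs, rhs]
  have := LinearMap.congr_fun e (Coalgebra.comul (R := k) (A := H) h)
  simpa using this

end Main3

set_option synthInstance.maxHeartbeats 400000 in
theorem stmt_10 (ρ : A →ₐ[k] A ⊗[k] H) (hρ : IsCoaction ρ)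
    (lam lamBar : H →ₗ[k] A)
    (hcolin : IsColinearMap ρ lam)
    (hinv₁ : convA lam lamBar = convUnit) (hinv₂ : convA lamBar lam = convUnit) :
    -- normal basis property: `A ≅ B ⊗ H` as left `B`-modules and right `H`-comodules,
    -- realised inside `A ⊗ H` by the image `rng` of `B ⊗ H`.
    ∀ rng : Submodule k (A ⊗[k] H),
      rng = LinearMap.range (((coinvSub ρ).subtype).rTensor H) →
      -- `∑ a₍₀₎ λ̄(a₍₁₎)` is coinvariant
      (∀ a : A, nuMap ρ lamBar a ∈ coinvSub ρ) ∧
      -- `φ : a ↦ ∑ a₍₀₎ λ̄(a₍₁₎) ⊗ a₍₂₎` lands in `B ⊗ H`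
      (∀ a : A, phiMap ρ lamBar a ∈ rng) ∧
      -- `φ` and `ψ : b ⊗ h ↦ b λ(h)` are mutually inverse
      (∀ a : A, psiMap lam (phiMap ρ lamBar a) = a) ∧
      (∀ z ∈ rng, phiMap ρ lamBar (psiMap lam z) = z) ∧
      -- both maps are left `B`-linear
      (∀ b ∈ coinvSub ρ, ∀ a : A,
        phiMap ρ lamBar (b * a) = (b ⊗ₜ[k] (1 : H)) * phiMap ρ lamBar a) ∧
      (∀ b ∈ coinvSub ρ, ∀ z : A ⊗[k] H,
        psiMap lam ((b ⊗ₜ[k] (1 : H)) * z) = b * psiMap lam z) ∧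
      -- both maps are right `H`-colinear (the coaction on `B ⊗ H ⊆ A ⊗ H` is `id ⊗ Δ`)
      (∀ a : A,
        (TensorProduct.assoc k A H H).symm
            ((Coalgebra.comul (R := k) (A := H)).lTensor A (phiMap ρ lamBar a)) =
          ((phiMap ρ lamBar).rTensor H) (ρ a)) ∧
      (∀ z ∈ rng,
        ρ (psiMap lam z) =
          ((psiMap lam).rTensor H)
            ((TensorProduct.assoc k A H H).symm
              ((Coalgebra.comul (R := k) (A := H)).lTensor A z))) := by
  intro rng hrng
  have hcolin' : ρ.toLinearMap ∘ₗ lam = lam.rTensor H ∘ₗ Coalgebra.comul := hcolin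
  have hrlb : ρ.toLinearMap ∘ₗ lamBar = Tm' lamBar :=
    rho_comp_lamBar lam lamBar ρ hcolin' hinv₁ hinv₂
  have goal1 : ∀ a : A, nuMap ρ lamBar a ∈ coinvSub ρ := fun a =>
    (mem_coinvSub_iff ρ _).2 (nu_coinv ρ lam lamBar hρ hrlb hinv₂ a)
  refine ⟨goal1, ?_, fun a => psi_phi ρ lam lamBar hρ hinv₂ a, ?_, ?_, ?_,
    fun a => phi_colinear ρ lamBar hρ a, ?_⟩
  · intro a
    rw [hrng]
    refine ⟨(LinearMap.codRestrict (coinvSub ρ) (nuMap ρ lamBar) goal1).rTensor H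
      (ρ.toLinearMap a), ?_⟩
    rw [← LinearMap.comp_apply, ← LinearMap.rTensor_comp, LinearMap.subtype_comp_codRestrict]
    rfl
  · intro z hz
    rw [hrng] at hz
    obtain ⟨w, rfl⟩ := hz
    induction w using TensorProduct.induction_on with
    | zero => simp
    | tmul b0 h =>
      have hb : ρ (b0 : A) = (b0 : A) ⊗ₜ[k] (1 : H) := (mem_coinvSub_iff ρ _).1 b0.2
      have h1 : ((coinvSub ρ).subtype).rTensor H (b0 ⊗ₜ[k] h) = (b0 : A) ⊗ₜ[k] h := rfl
      rw [h1, show psiMap lam ((b0 : A) ⊗ₜ[k] h) = (b0 : A) * lam h by simp [psiMap],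
        phi_mul ρ lamBar (b0 : A) hb (lam h), phi_lam ρ lam lamBar hcolin' hinv₁ h]
      simp [Algebra.TensorProduct.tmul_mul_tmul]
    | add x y hx hy => simp only [map_add, hx, hy]
  · intro b hb a
    exact phi_mul ρ lamBar b ((mem_coinvSub_iff ρ b).1 hb) a
  · intro b _ z
    exact psi_mulLeft lam b z
  · intro z hz
    rw [hrng] at hz
    obtain ⟨w, rfl⟩ := hz
    induction w using TensorProduct.induction_on with
    | zero => simp
    | tmul b0 h =>
      have hb : ρ (b0 : A) = (b0 : A) ⊗ₜ[k] (1 : H) := (mem_coinvSub_iff ρ _).1 b0.2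
      have h1 : ((coinvSub ρ).subtype).rTensor H (b0 ⊗ₜ[k] h) = (b0 : A) ⊗ₜ[k] h := rfl
      rw [h1]
      exact psi_colinear_pure ρ lam hcolin' (b0 : A) hb h
    | add x y hx hy => simp only [map_add, hx, hy]
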